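/- (Theorem 1 of the paper) If there exists a solution x ∈ B^N such that ω_{g,h}(x) = |δ_g(x⊕1_h) − δ_g(x)| > 0, then variables x_g and x_h interact in f, i.e., there exists a Walsh coefficient w_i ≠ 0 with i_g = 1 and i_h = 1. -/
import Mathlib


open Finset

def flipBit {N : ℕ} (x : Fin N → Bool) (g : Fin N) : Fin N → Bool :=
  Function.update x g (!x g)

def psi {N : ℕ} (i x : Fin N → Bool) : ℝ :=
  (-1 : ℝ) ^ (∑ j : Fin N, (i j && x j).toNat)

def delta {N : ℕ} (f : (Fin N → Bool) → ℝ) (g : Fin N) (x : Fin N → Bool) : ℝ :=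
  f (flipBit x g) - f x

def omega {N : ℕ} (f : (Fin N → Bool) → ℝ) (g h : Fin N) (x : Fin N → Bool) : ℝ :=
  |delta f g (flipBit x h) - delta f g x|

lemma psi_eq_prod {N : ℕ} (i x : Fin N → Bool) :
    psi i x = ∏ j : Fin N, (-1 : ℝ) ^ (i j && x j).toNat := by
  rw [psi, Finset.prod_pow_eq_pow_sum]

lemma psi_flip {N : ℕ} (i x : Fin N → Bool) (g : Fin N) :
    psi i (flipBit x g) = (if i g then (-1:ℝ) else 1) * psi i x := by
  rw [psi_eq_prod, psi_eq_prod,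
    Fintype.prod_eq_mul_prod_compl g, Fintype.prod_eq_mul_prod_compl g]
  have hcompl : (∏ j ∈ ({g} : Finset (Fin N))ᶜ, (-1:ℝ)^(i j && flipBit x g j).toNat)
      = ∏ j ∈ ({g} : Finset (Fin N))ᶜ, (-1:ℝ)^(i j && x j).toNat := by
    apply Finset.prod_congr rfl
    intro j hj
    have hjg : j ≠ g := by simpa using hj
    simp [flipBit, Function.update_of_ne hjg]
  rw [hcompl]
  have hg : flipBit x g g = !x g := by simp [flipBit]
  rw [hg]
  cases hig : i g <;> cases hxg : x g <;> simp [hxg] <;> ring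

theorem linkage_theorem {N : ℕ} (f : (Fin N → Bool) → ℝ) (w : (Fin N → Bool) → ℝ)
    (hw : ∀ x, f x = ∑ i : Fin N → Bool, w i * psi i x)
    (g h : Fin N) (hgh : g ≠ h)
    (hx : ∃ x : Fin N → Bool, omega f g h x > 0) :
    ∃ i : Fin N → Bool, w i ≠ 0 ∧ i g = true ∧ i h = true := by
  by_contra hcon
  push_neg at hcon
  obtain ⟨x, hx⟩ := hx
  have key : delta f g (flipBit x h) - delta f g x = 0 := by
    simp only [delta, hw]
    rw [← Finset.sum_sub_distrib, ← Finset.sum_sub_distrib, ← Finset.sum_sub_distrib]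
    apply Finset.sum_eq_zero
    intro i _
    rw [psi_flip i (flipBit x h) g, psi_flip i x h, psi_flip i x g]
    by_cases hig : i g = true
    · by_cases hih : i h = true
      · have hw0 : w i = 0 := by
          by_contra hne
          exact (hcon i hne hig) hih
        simp [hw0]
      · simp only [hig, if_true, eq_self_iff_true]
        rw [if_neg hih]
        ring
    · rw [if_neg hig]
      ring
  rw [omega, key] at hx
  simp at hx
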